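/- Let m ≥ 2 be an integer, α ∈ (0,1) real, and μ a finite nonzero Borel measure on T = {0,1,...,m-1}^ℕ such that for μ-a.e. x the upper α-density Θ^{α,*}(μ,x) is finite and the lower α-density Θ_{α,*}(μ,x) is positive. Then the essential supremum over x of Θ^{α,*}(μ,x)/Θ_{α,*}(μ,x) is at least max(m^α/⌊m^α⌋, ⌈m^α⌉/m^α). -/

import Mathlib

open MeasureTheory Filter Set ENNReal

open Classical in
noncomputable def tdist {m : ℕ} (a b : ℕ → Fin m) : ℝ :=
  if h : ∃ n, a n ≠ b n then (m : ℝ) ^ (-(Nat.find h : ℤ)) else 0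

def cyl {m : ℕ} (n : ℕ) (x : ℕ → Fin m) : Set (ℕ → Fin m) :=
  {y | ∀ i < n, y i = x i}

def msupp {m : ℕ} (μ : Measure (ℕ → Fin m)) : Set (ℕ → Fin m) :=
  {x | ∀ n : ℕ, 0 < μ (cyl n x)}

noncomputable def fdens {m : ℕ} (μ : Measure (ℕ → Fin m)) (α : ℝ) (n : ℕ)
    (x : ℕ → Fin m) : ℝ :=
  (m : ℝ) ^ (α * n) * (μ (cyl n x)).toReal

noncomputable def thetaUpper {m : ℕ} (μ : Measure (ℕ → Fin m)) (α : ℝ)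
    (x : ℕ → Fin m) : ℝ≥0∞ :=
  Filter.limsup (fun n : ℕ => ENNReal.ofReal ((m : ℝ) ^ (α * n)) * μ (cyl n x)) atTop

noncomputable def thetaLower {m : ℕ} (μ : Measure (ℕ → Fin m)) (α : ℝ)
    (x : ℕ → Fin m) : ℝ≥0∞ :=
  Filter.liminf (fun n : ℕ => ENNReal.ofReal ((m : ℝ) ^ (α * n)) * μ (cyl n x)) atTop


/-!
Fix `q > 1`. Pigeonholing `Θ_*` and `Θ^*` into intervals `[q^i, q^(i+1))` and making the
convergence uniform (Egorov) gives reals `a, b`, a level `N` and a set `G` of positive measure on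
which `Θ_* ∈ [a, qa)`, `Θ^* ∈ [b, qb)` and the cylinder densities `m^(αn) μ(B_n)` stay in
`(a/q, qb)` for `n ≥ N`. Take a point `x` of `G` at which `G` has cylinder density one (Lebesgue
density for cylinders, proved by a stopping-time covering). For large `n`, `B_n(x)` is almost
covered by the `k` children that meet `G`, each of density in `(a/q, qb)`, so
`k a/q ≤ m^α dens_n(x) ≲ k q b`. At levels where `dens_n(x) < qa` this forces `k ≤ ⌊m^α⌋` and
`b/a ≳ m^α/k`; at levels where `dens_n(x) > b/q` it forces `k ≥ ⌈m^α⌉` and `b/a ≳ k/m^α`.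
Since `b/(qa) ≤ Θ^*(x)/Θ_*(x)`, letting `q → 1` gives both bounds.
-/

open Topology

section Cylinders

variable {m : ℕ}

theorem cyl_eq_cylinder (n : ℕ) (x : ℕ → Fin m) : cyl n x = PiNat.cylinder x n := rfl

theorem cyl_eq_preimage (n : ℕ) (x : ℕ → Fin m) :
    cyl n x = (fun y (i : Fin n) => y i) ⁻¹' {fun i : Fin n => x i} := by
  ext y
  simp [cyl, funext_iff, Fin.forall_iff]

theorem measurableSet_cyl (n : ℕ) (x : ℕ → Fin m) : MeasurableSet (cyl n x) := by
  rw [cyl_eq_preimage]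
  exact measurable_pi_lambda _ (fun i => measurable_pi_apply _) (measurableSet_singleton _)

theorem countable_setOf_cyl : {s : Set (ℕ → Fin m) | ∃ n x, s = cyl n x}.Countable := by
  have : {s : Set (ℕ → Fin m) | ∃ n x, s = cyl n x} ⊆
      ⋃ n, range fun w : Fin n → Fin m => (fun y (i : Fin n) => y i) ⁻¹' {w} := by
    rintro _ ⟨n, x, rfl⟩
    exact mem_iUnion.2 ⟨n, _, (cyl_eq_preimage n x).symm⟩
  exact (countable_iUnion fun n => countable_range _).mono this

theorem measurable_measure_cyl (μ : Measure (ℕ → Fin m)) (n : ℕ) :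
    Measurable fun x => μ (cyl n x) := by
  simp_rw [cyl_eq_preimage]
  exact (measurable_of_countable fun w : Fin n → Fin m => μ (_ ⁻¹' {w})).comp
    (measurable_pi_lambda _ fun i => measurable_pi_apply _)

theorem cyl_eq_of_mem {n : ℕ} {x y : ℕ → Fin m} (h : y ∈ cyl n x) : cyl n y = cyl n x :=
  PiNat.mem_cylinder_iff_eq.1 h

theorem eventually_cyl_subset {U : Set (ℕ → Fin m)} (hU : IsOpen U) {x : ℕ → Fin m}
    (hx : x ∈ U) : ∀ᶠ n in atTop, cyl n x ⊆ U := by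
  obtain ⟨_, ⟨y, n, rfl⟩, hxy, hU⟩ :=
    (PiNat.isTopologicalBasis_cylinders _).exists_subset_of_mem_open hx hU
  rw [← cyl_eq_cylinder, ← cyl_eq_of_mem hxy] at hU
  exact eventually_atTop.2 ⟨n, fun k hk => (PiNat.cylinder_anti x hk).trans hU⟩

theorem mem_cyl_succ_update {n : ℕ} {x y : ℕ → Fin m} {j : Fin m} :
    y ∈ cyl (n + 1) (Function.update x n j) ↔ y ∈ cyl n x ∧ y n = j := by
  simp only [cyl, mem_ofPred_eq, Nat.lt_succ_iff_lt_or_eq, or_imp, forall_and, forall_eq,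
    Function.update_self]
  exact and_congr_left' (forall₂_congr fun i hi => by rw [Function.update_of_ne hi.ne])

end Cylinders

section Density

variable {m : ℕ}

theorem exists_pairwise_disjoint_cyl_cover (P : Set (ℕ → Fin m) → Prop)
    {E : Set (ℕ → Fin m)} (hE : ∀ x ∈ E, ∃ n, P (cyl n x)) :
    ∃ 𝒮 : Set (Set (ℕ → Fin m)), 𝒮.Countable ∧ 𝒮.Pairwise Disjoint ∧
      (∀ s ∈ 𝒮, P s ∧ MeasurableSet s) ∧ E ⊆ ⋃₀ 𝒮 := by
  -- stop each point at the first level where its cylinder satisfies `P`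
  set τ : (ℕ → Fin m) → ℕ := fun x => sInf {n | P (cyl n x)}
  have hτ : ∀ x ∈ E, P (cyl (τ x) x) := fun x hx => Nat.sInf_mem (hE x hx)
  have eq_of_le : ∀ x ∈ E, ∀ y ∈ E, τ x ≤ τ y →
      ¬Disjoint (cyl (τ x) x) (cyl (τ y) y) → cyl (τ x) x = cyl (τ y) y := by
    intro x hx y hy hle hxy
    obtain ⟨z, hzx, hzy⟩ := not_disjoint_iff.1 hxy
    have hyx : cyl (τ x) y = cyl (τ x) x := by
      rw [← cyl_eq_of_mem hzx, cyl_eq_of_mem (PiNat.cylinder_anti y hle hzy)]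
    have hτy : τ y ≤ τ x := Nat.sInf_le (show P (cyl (τ x) y) from hyx ▸ hτ x hx)
    rw [← hyx, le_antisymm hle hτy]
  refine ⟨(fun x => cyl (τ x) x) '' E, countable_setOf_cyl.mono ?_, ?_, ?_, ?_⟩
  · rintro _ ⟨x, -, rfl⟩
    exact ⟨_, _, rfl⟩
  · rintro _ ⟨x, hx, rfl⟩ _ ⟨y, hy, rfl⟩ hne
    by_contra hxy
    rcases le_total (τ x) (τ y) with h | h
    · exact hne (eq_of_le x hx y hy h hxy)
    · exact hne (eq_of_le y hy x hx h (fun h' => hxy h'.symm)).symm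
  · rintro _ ⟨x, hx, rfl⟩
    exact ⟨hτ x hx, measurableSet_cyl _ _⟩
  · exact fun x hx => ⟨_, ⟨x, hx, rfl⟩, PiNat.self_mem_cylinder x _⟩

theorem ae_eventually_measure_cyl_diff_le (μ : Measure (ℕ → Fin m)) [IsFiniteMeasure μ]
    {G : Set (ℕ → Fin m)} (hG : MeasurableSet G) {δ : ℝ≥0∞} (hδ : δ ≠ 0) :
    ∀ᵐ x ∂μ, x ∈ G → ∀ᶠ n in atTop, μ (cyl n x \ G) ≤ δ * μ (cyl n x) := by
  set E := {x | x ∈ G ∧ ∃ᶠ n in atTop, δ * μ (cyl n x) < μ (cyl n x \ G)}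
  have hEG : E ⊆ G := fun x hx => hx.1
  rw [ae_iff]
  refine measure_mono_null (fun x hx => ?_) (?_ : μ E = 0)
  · show x ∈ G ∧ _
    simpa only [mem_ofPred_eq, Classical.not_imp, not_eventually, not_le] using hx
  suffices h : δ * μ E ≤ 0 by simpa [hδ] using h
  refine ENNReal.le_of_forall_pos_le_add fun ε hε _ => ?_
  obtain ⟨U, hEU, hU, hμU⟩ :=
    E.exists_isOpen_lt_add (measure_ne_top μ E) (ENNReal.coe_ne_zero.2 hε.ne')
  obtain ⟨𝒮, h𝒮c, h𝒮d, h𝒮, hE𝒮⟩ :=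
    exists_pairwise_disjoint_cyl_cover (fun s => s ⊆ U ∧ δ * μ s < μ (s \ G)) (E := E)
      fun x hx => by
        obtain ⟨n, hn, hU⟩ := (hx.2.and_eventually (eventually_cyl_subset hU (hEU hx))).exists
        exact ⟨n, hU, hn⟩
  have h𝒮U : ⋃₀ 𝒮 ⊆ U := sUnion_subset fun s hs => (h𝒮 s hs).1.1
  have hmeas : MeasurableSet (⋃₀ 𝒮 \ G) :=
    (MeasurableSet.sUnion h𝒮c fun s hs => (h𝒮 s hs).2).diff hG
  have hbad : δ * μ (⋃₀ 𝒮) ≤ μ (⋃₀ 𝒮 \ G) := by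
    simp only [sUnion_eq_biUnion, iUnion_sdiff]
    rw [measure_biUnion h𝒮c h𝒮d fun s hs => (h𝒮 s hs).2,
      measure_biUnion h𝒮c (h𝒮d.mono' fun _ _ h => h.mono sdiff_subset sdiff_subset)
        fun s hs => (h𝒮 s hs).2.diff hG, ← ENNReal.tsum_mul_left]
    exact ENNReal.tsum_le_tsum fun s => (h𝒮 s s.2).1.2.le
  -- `E ⊆ G` and `⋃₀ 𝒮 \ G` fill disjoint parts of `U`, whose measure exceeds `μ E` by less than `ε`
  have hsmall : μ (⋃₀ 𝒮 \ G) ≤ ε := by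
    have : μ E + μ (⋃₀ 𝒮 \ G) < μ E + ε := by
      rw [← measure_union (disjoint_sdiff_right.mono_left hEG) hmeas]
      exact (measure_mono (union_subset hEU (sdiff_subset.trans h𝒮U))).trans_lt hμU
    exact ((ENNReal.add_lt_add_iff_left (measure_ne_top μ E)).1 this).le
  calc δ * μ E ≤ δ * μ (⋃₀ 𝒮) := by gcongr
    _ ≤ ε := hbad.trans hsmall
    _ = 0 + ε := (zero_add _).symm

end Density

section Branching

variable {m : ℕ} (μ : Measure (ℕ → Fin m))

theorem sum_measure_cyl_succ_update_le (s : Finset (Fin m)) (n : ℕ) (x : ℕ → Fin m) :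
    ∑ j ∈ s, μ (cyl (n + 1) (Function.update x n j)) ≤ μ (cyl n x) := by
  rw [← measure_biUnion_finset (fun i _ j _ hij => ?_) fun j _ => measurableSet_cyl _ _]
  · exact measure_mono (iUnion₂_subset fun j _ y hy => (mem_cyl_succ_update.1 hy).1)
  · exact disjoint_left.2 fun y hi hj =>
      hij ((mem_cyl_succ_update.1 hi).2.symm.trans (mem_cyl_succ_update.1 hj).2)

theorem exists_finset_measure_cyl_le_sum_add (G : Set (ℕ → Fin m)) (n : ℕ) (x : ℕ → Fin m) :
    ∃ J : Finset (Fin m), (∀ j ∈ J, (cyl (n + 1) (Function.update x n j) ∩ G).Nonempty) ∧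
      μ (cyl n x) ≤ ∑ j ∈ J, μ (cyl (n + 1) (Function.update x n j)) + μ (cyl n x \ G) := by
  classical
  refine ⟨Finset.univ.filter fun j => (cyl (n + 1) (Function.update x n j) ∩ G).Nonempty,
    fun j hj => (Finset.mem_filter.1 hj).2,
    (measure_mono fun y hy => ?_).trans
      ((measure_union_le _ _).trans (add_le_add_left (measure_biUnion_finset_le _ _) _))⟩
  by_cases hyG : y ∈ G
  · have hy' : y ∈ cyl (n + 1) (Function.update x n (y n)) := mem_cyl_succ_update.2 ⟨hy, rfl⟩
    exact Or.inl (mem_iUnion₂.2 ⟨y n, by simpa using ⟨y, hy', hyG⟩, hy'⟩)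
  · exact Or.inr ⟨hy, hyG⟩

variable [IsFiniteMeasure μ]

theorem exists_finset_toReal_measure_cyl_bounds (G : Set (ℕ → Fin m)) {δ : ℝ} (hδ : 0 ≤ δ)
    {n : ℕ} {x : ℕ → Fin m} (hx : μ (cyl n x \ G) ≤ ENNReal.ofReal δ * μ (cyl n x)) :
    ∃ J : Finset (Fin m), (∀ j ∈ J, (cyl (n + 1) (Function.update x n j) ∩ G).Nonempty) ∧
      ∑ j ∈ J, (μ (cyl (n + 1) (Function.update x n j))).toReal ≤ (μ (cyl n x)).toReal ∧
      (1 - δ) * (μ (cyl n x)).toReal ≤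
        ∑ j ∈ J, (μ (cyl (n + 1) (Function.update x n j))).toReal := by
  obtain ⟨J, hJG, hcover⟩ := exists_finset_measure_cyl_le_sum_add μ G n x
  have hsum : ∑ j ∈ J, μ (cyl (n + 1) (Function.update x n j)) ≠ ∞ :=
    ENNReal.sum_ne_top.2 fun j _ => measure_ne_top μ _
  have hδx : ENNReal.ofReal δ * μ (cyl n x) ≠ ∞ :=
    ENNReal.mul_ne_top ENNReal.ofReal_ne_top (measure_ne_top μ _)
  refine ⟨J, hJG, ?_, ?_⟩
  · rw [← ENNReal.toReal_sum fun j _ => measure_ne_top μ _]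
    exact ENNReal.toReal_mono (measure_ne_top μ _) (sum_measure_cyl_succ_update_le μ J n x)
  · have h := ENNReal.toReal_mono (ENNReal.add_ne_top.2 ⟨hsum, hδx⟩)
      (hcover.trans (add_le_add_right hx _))
    rw [ENNReal.toReal_add hsum hδx, ENNReal.toReal_sum fun j _ => measure_ne_top μ _,
      ENNReal.toReal_mul, ENNReal.toReal_ofReal hδ] at h
    linarith

theorem exists_card_mul_le_and_le_card_mul (hm : 0 < m) (α : ℝ) {G : Set (ℕ → Fin m)}
    {lo hi δ : ℝ} (hδ : 0 ≤ δ) {n : ℕ} {x : ℕ → Fin m}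
    (hG : ∀ y ∈ G, fdens μ α (n + 1) y ∈ Icc lo hi)
    (hx : μ (cyl n x \ G) ≤ ENNReal.ofReal δ * μ (cyl n x)) :
    ∃ k : ℕ, k * lo ≤ (m : ℝ) ^ α * fdens μ α n x ∧
      (1 - δ) * ((m : ℝ) ^ α * fdens μ α n x) ≤ k * hi := by
  obtain ⟨J, hJG, hsum_le, hle_sum⟩ := exists_finset_toReal_measure_cyl_bounds μ G hδ hx
  set w := (m : ℝ) ^ (α * ↑(n + 1)) with hw_def
  set v := fun j => (μ (cyl (n + 1) (Function.update x n j))).toReal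
  have hw : (m : ℝ) ^ α * fdens μ α n x = w * (μ (cyl n x)).toReal := by
    rw [hw_def, fdens, ← mul_assoc, ← Real.rpow_add (by exact_mod_cast hm)]
    congr 2
    push_cast
    ring
  have hJ : ∀ j ∈ J, w * v j ∈ Icc lo hi := by
    intro j hj
    obtain ⟨y, hy, hyG⟩ := hJG j hj
    have h := hG y hyG
    rwa [fdens, cyl_eq_of_mem hy] at h
  have hw0 : 0 ≤ w := by positivity
  refine ⟨J.card, ?_, ?_⟩
  · calc (J.card : ℝ) * lo ≤ ∑ j ∈ J, w * v j := by
          simpa using J.card_nsmul_le_sum _ lo fun j hj => (hJ j hj).1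
      _ = w * ∑ j ∈ J, v j := (Finset.mul_sum _ _ _).symm
      _ ≤ _ := by rw [hw]; gcongr
  · calc (1 - δ) * ((m : ℝ) ^ α * fdens μ α n x) = w * ((1 - δ) * (μ (cyl n x)).toReal) := by
          rw [hw]; ring
      _ ≤ w * ∑ j ∈ J, v j := by gcongr
      _ = ∑ j ∈ J, w * v j := Finset.mul_sum _ _ _
      _ ≤ J.card * hi := by simpa using J.sum_le_card_nsmul _ hi fun j hj => (hJ j hj).2

end Branching

theorem thetaLower_le_thetaUpper {m : ℕ} (μ : Measure (ℕ → Fin m)) (α : ℝ) (x : ℕ → Fin m) :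
    thetaLower μ α x ≤ thetaUpper μ α x :=
  liminf_le_limsup

section Densities

variable {m : ℕ} (μ : Measure (ℕ → Fin m)) [IsFiniteMeasure μ] (α : ℝ)

theorem ofReal_fdens (n : ℕ) (x : ℕ → Fin m) :
    ENNReal.ofReal (fdens μ α n x) = ENNReal.ofReal ((m : ℝ) ^ (α * n)) * μ (cyl n x) := by
  rw [fdens, ENNReal.ofReal_mul (by positivity), ENNReal.ofReal_toReal (measure_ne_top μ _)]

theorem thetaUpper_eq_limsup_fdens (x : ℕ → Fin m) :
    thetaUpper μ α x = limsup (fun n => ENNReal.ofReal (fdens μ α n x)) atTop := by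
  simp only [thetaUpper, ofReal_fdens]

theorem thetaLower_eq_liminf_fdens (x : ℕ → Fin m) :
    thetaLower μ α x = liminf (fun n => ENNReal.ofReal (fdens μ α n x)) atTop := by
  simp only [thetaLower, ofReal_fdens]

variable {μ α}

theorem frequently_fdens_lt {c : ℝ} {x : ℕ → Fin m} (h : thetaLower μ α x < ENNReal.ofReal c) :
    ∃ᶠ n in atTop, fdens μ α n x < c := by
  rw [thetaLower_eq_liminf_fdens] at h
  exact (frequently_lt_of_liminf_lt (by isBoundedDefault) h).mono fun n hn =>
    (ENNReal.ofReal_lt_ofReal_iff'.1 hn).1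

theorem frequently_lt_fdens {c : ℝ} {x : ℕ → Fin m} (h : ENNReal.ofReal c < thetaUpper μ α x) :
    ∃ᶠ n in atTop, c < fdens μ α n x := by
  rw [thetaUpper_eq_limsup_fdens] at h
  exact (frequently_lt_of_lt_limsup (by isBoundedDefault) h).mono fun n hn =>
    (ENNReal.ofReal_lt_ofReal_iff'.1 hn).1

theorem eventually_lt_fdens {c : ℝ} {x : ℕ → Fin m} (h : ENNReal.ofReal c < thetaLower μ α x) :
    ∀ᶠ n in atTop, c < fdens μ α n x := by
  rw [thetaLower_eq_liminf_fdens] at h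
  exact (eventually_lt_of_lt_liminf h).mono fun n hn => (ENNReal.ofReal_lt_ofReal_iff'.1 hn).1

theorem eventually_fdens_lt {c : ℝ} {x : ℕ → Fin m} (h : thetaUpper μ α x < ENNReal.ofReal c) :
    ∀ᶠ n in atTop, fdens μ α n x < c := by
  rw [thetaUpper_eq_limsup_fdens] at h
  exact (eventually_lt_of_limsup_lt h).mono fun n hn => (ENNReal.ofReal_lt_ofReal_iff'.1 hn).1

end Densities

def fdensWindow {m : ℕ} (μ : Measure (ℕ → Fin m)) (α lo hi : ℝ) (N : ℕ) : Set (ℕ → Fin m) :=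
  {x | ∀ n ≥ N, fdens μ α n x ∈ Ioo lo hi}

theorem measurableSet_fdensWindow {m : ℕ} (μ : Measure (ℕ → Fin m)) (α lo hi : ℝ) (N : ℕ) :
    MeasurableSet (fdensWindow μ α lo hi N) := by
  simp only [fdensWindow, ofPred_forall]
  exact .iInter fun n => .iInter fun _ =>
    (((measurable_measure_cyl μ n).ennreal_toReal.const_mul _) measurableSet_Ioo)

theorem exists_mem_fdensWindow {m : ℕ} {μ : Measure (ℕ → Fin m)} [IsFiniteMeasure μ] {α lo hi : ℝ}
    {x : ℕ → Fin m}
    (hlo : ENNReal.ofReal lo < thetaLower μ α x) (hhi : thetaUpper μ α x < ENNReal.ofReal hi) :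
    ∃ N, x ∈ fdensWindow μ α lo hi N :=
  eventually_atTop.1 ((eventually_lt_fdens hlo).and (eventually_fdens_lt hhi))

theorem exists_zpow_le_lt {t : ℝ≥0∞} (h0 : t ≠ 0) (htop : t ≠ ∞) {q : ℝ} (hq : 1 < q) :
    ∃ i : ℤ, ENNReal.ofReal (q ^ i) ≤ t ∧ t < ENNReal.ofReal (q * q ^ i) := by
  obtain ⟨i, hi, hi'⟩ := exists_mem_Ico_zpow (ENNReal.toReal_pos h0 htop) hq
  refine ⟨i, (ENNReal.ofReal_le_iff_le_toReal htop).2 hi, ?_⟩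
  rw [ENNReal.lt_ofReal_iff_toReal_lt htop, mul_comm, ← zpow_add_one₀ (by positivity)]
  exact hi'

theorem exists_measure_ne_zero_mem_Ico {X : Type*} [MeasurableSpace X] {μ : Measure X}
    (hμ : μ ≠ 0) {f g : X → ℝ≥0∞} (hfg : ∀ᵐ x ∂μ, f x ≠ 0 ∧ f x ≠ ∞ ∧ g x ≠ 0 ∧ g x ≠ ∞)
    {q : ℝ} (hq : 1 < q) :
    ∃ a b : ℝ, 0 < a ∧ 0 < b ∧
      μ {x | f x ∈ Ico (ENNReal.ofReal a) (ENNReal.ofReal (q * a)) ∧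
        g x ∈ Ico (ENNReal.ofReal b) (ENNReal.ofReal (q * b))} ≠ 0 := by
  by_contra! h
  have hq0 : 0 < q := by linarith
  have hnull := measure_iUnion_null fun i : ℤ => measure_iUnion_null fun j : ℤ =>
    h _ _ (zpow_pos hq0 i) (zpow_pos hq0 j)
  have hfalse : ∀ᵐ x ∂μ, False := by
    filter_upwards [hfg, measure_eq_zero_iff_ae_notMem.1 hnull] with x ⟨hf0, hf, hg0, hg⟩ hx
    obtain ⟨i, hi⟩ := exists_zpow_le_lt hf0 hf hq
    obtain ⟨j, hj⟩ := exists_zpow_le_lt hg0 hg hq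
    exact hx (mem_iUnion₂.2 ⟨i, j, hi, hj⟩)
  exact hμ (ae_eq_bot.1 (eventually_false_iff_eq_bot.1 hfalse))

theorem pos_of_measure_ne_zero {m : ℕ} {μ : Measure (ℕ → Fin m)} (hμ : μ ≠ 0) : 0 < m := by
  rcases Nat.eq_zero_or_pos m with rfl | hm
  · exact absurd (Measure.eq_zero_of_isEmpty μ) hμ
  · exact hm

section Engine

variable {m : ℕ} {μ : Measure (ℕ → Fin m)} [IsFiniteMeasure μ] {α : ℝ}

theorem eventually_exists_branching (hm : 0 < m) {q lo hi : ℝ} (hq : 1 < q) {N : ℕ}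
    {x : ℕ → Fin m} (hdens : ∀ᶠ n in atTop, μ (cyl n x \ fdensWindow μ α lo hi N) ≤
      ENNReal.ofReal (1 - q⁻¹) * μ (cyl n x)) :
    ∀ᶠ n in atTop, ∃ k : ℕ, k * lo ≤ (m : ℝ) ^ α * fdens μ α n x ∧
      (m : ℝ) ^ α * fdens μ α n x ≤ q * (k * hi) := by
  filter_upwards [eventually_ge_atTop N, hdens] with n hn hdn
  obtain ⟨k, hlo, hhi⟩ := exists_card_mul_le_and_le_card_mul μ hm α
    (G := fdensWindow μ α lo hi N) (sub_nonneg.2 (inv_le_one_of_one_le₀ hq.le))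
    (fun y hy => Ioo_subset_Icc_self (hy (n + 1) (by omega))) hdn
  rw [_root_.sub_sub_cancel, inv_mul_le_iff₀ (by linarith)] at hhi
  exact ⟨k, hlo, hhi⟩

theorem exists_few_branches_of_thetaLower_lt (hm : 0 < m) {q a b : ℝ} (hq : 1 < q) {N : ℕ}
    {x : ℕ → Fin m} (hx : x ∈ fdensWindow μ α (a / q) (q * b) N)
    (hdens : ∀ᶠ n in atTop, μ (cyl n x \ fdensWindow μ α (a / q) (q * b) N) ≤
      ENNReal.ofReal (1 - q⁻¹) * μ (cyl n x)) (ha : 0 < a)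
    (hlow : thetaLower μ α x < ENNReal.ofReal (q * a)) :
    ∃ k : ℕ, (k : ℝ) < q ^ 2 * (m : ℝ) ^ α ∧ (m : ℝ) ^ α * a < k * q ^ 3 * b := by
  obtain ⟨n, hn, hN, k, hlo, hhi⟩ := ((frequently_fdens_lt hlow).and_eventually
    ((eventually_ge_atTop N).and (eventually_exists_branching hm hq hdens))).exists
  have hD := (hx n hN).1
  set β := (m : ℝ) ^ α
  have hβ : 0 < β := by positivity
  have hq0 : 0 < q := by linarith
  refine ⟨k, lt_of_mul_lt_mul_right (?_ : (k : ℝ) * a < q ^ 2 * β * a) ha.le, ?_⟩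
  · calc (k : ℝ) * a = q * (k * (a / q)) := by field_simp
      _ ≤ q * (β * fdens μ α n x) := by gcongr
      _ < q * (β * (q * a)) := by gcongr
      _ = q ^ 2 * β * a := by ring
  · calc β * a = q * (β * (a / q)) := by field_simp
      _ < q * (β * fdens μ α n x) := by gcongr
      _ ≤ q * (q * (k * (q * b))) := by gcongr
      _ = k * q ^ 3 * b := by ring

theorem exists_many_branches_of_le_thetaUpper (hm : 0 < m) {q a b : ℝ} (hq : 1 < q) {N : ℕ}
    {x : ℕ → Fin m} (hx : x ∈ fdensWindow μ α (a / q) (q * b) N)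
    (hdens : ∀ᶠ n in atTop, μ (cyl n x \ fdensWindow μ α (a / q) (q * b) N) ≤
      ENNReal.ofReal (1 - q⁻¹) * μ (cyl n x)) (hb : 0 < b)
    (hup : ENNReal.ofReal b ≤ thetaUpper μ α x) :
    ∃ k : ℕ, (m : ℝ) ^ α < k * q ^ 3 ∧ k * a < q ^ 2 * (m : ℝ) ^ α * b := by
  have hbq : ENNReal.ofReal (b / q) < thetaUpper μ α x :=
    ((ENNReal.ofReal_lt_ofReal_iff hb).2 (div_lt_self hb hq)).trans_le hup
  obtain ⟨n, hn, hN, k, hlo, hhi⟩ := ((frequently_lt_fdens hbq).and_eventually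
    ((eventually_ge_atTop N).and (eventually_exists_branching hm hq hdens))).exists
  have hD := (hx n hN).2
  set β := (m : ℝ) ^ α
  have hβ : 0 < β := by positivity
  have hq0 : 0 < q := by linarith
  refine ⟨k, lt_of_mul_lt_mul_right (?_ : β * b < k * q ^ 3 * b) hb.le, ?_⟩
  · calc β * b = q * (β * (b / q)) := by field_simp
      _ < q * (β * fdens μ α n x) := by gcongr
      _ ≤ q * (q * (k * (q * b))) := by gcongr
      _ = k * q ^ 3 * b := by ring
  · calc (k : ℝ) * a = q * (k * (a / q)) := by field_simp
      _ ≤ q * (β * fdens μ α n x) := by gcongr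
      _ < q * (β * (q * b)) := by gcongr
      _ = q ^ 2 * β * b := by ring

theorem exists_ratio_le_essSup_and_branching_numbers (hμ : μ ≠ 0)
    (hae : ∀ᵐ x ∂μ, thetaUpper μ α x < ⊤ ∧ 0 < thetaLower μ α x) {q : ℝ} (hq : 1 < q) :
    ∃ a b : ℝ, 0 < a ∧ 0 < b ∧
      ENNReal.ofReal (b / (q * a)) ≤ essSup (fun x => thetaUpper μ α x / thetaLower μ α x) μ ∧
      (∃ k : ℕ, (k : ℝ) < q ^ 2 * (m : ℝ) ^ α ∧ (m : ℝ) ^ α * a < k * q ^ 3 * b) ∧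
      ∃ k : ℕ, (m : ℝ) ^ α < k * q ^ 3 ∧ k * a < q ^ 2 * (m : ℝ) ^ α * b := by
  obtain ⟨a, b, ha, hb, hA⟩ := exists_measure_ne_zero_mem_Ico hμ (f := thetaLower μ α)
    (g := thetaUpper μ α) (hae.mono fun x ⟨hup, hlow⟩ =>
      ⟨hlow.ne', ((thetaLower_le_thetaUpper μ α x).trans_lt hup).ne,
        (hlow.trans_le (thetaLower_le_thetaUpper μ α x)).ne', hup.ne⟩) hq
  obtain ⟨N, hN⟩ : ∃ N, μ ({x | thetaLower μ α x ∈ Ico (ENNReal.ofReal a) (ENNReal.ofReal (q * a)) ∧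
      thetaUpper μ α x ∈ Ico (ENNReal.ofReal b) (ENNReal.ofReal (q * b))} ∩
        fdensWindow μ α (a / q) (q * b) N) ≠ 0 := by
    by_contra! h
    refine hA (measure_mono_null (fun x hx => ?_) (measure_iUnion_null h))
    obtain ⟨N, hxN⟩ := exists_mem_fdensWindow
      (((ENNReal.ofReal_lt_ofReal_iff ha).2 (div_lt_self ha hq)).trans_le hx.1.1) hx.2.2
    exact mem_iUnion.2 ⟨N, hx, hxN⟩
  have hδ : ENNReal.ofReal (1 - q⁻¹) ≠ 0 := by
    simpa using inv_lt_one_of_one_lt₀ hq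
  obtain ⟨x, ⟨hxA, hxG⟩, hdens, hratio⟩ := Measure.exists_mem_of_measure_ne_zero_of_ae hN
    (ae_restrict_of_ae ((ae_eventually_measure_cyl_diff_le μ
      (measurableSet_fdensWindow μ α _ _ N) hδ).and (ae_le_essSup _)))
  have hm := pos_of_measure_ne_zero hμ
  refine ⟨a, b, ha, hb, ?_,
    exists_few_branches_of_thetaLower_lt hm hq hxG (hdens hxG) ha hxA.1.2,
    exists_many_branches_of_le_thetaUpper hm hq hxG (hdens hxG) hb hxA.2.1⟩
  calc ENNReal.ofReal (b / (q * a)) = ENNReal.ofReal b / ENNReal.ofReal (q * a) :=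
        ENNReal.ofReal_div_of_pos (by positivity)
    _ ≤ thetaUpper μ α x / thetaLower μ α x := ENNReal.div_le_div hxA.2.1 hxA.1.2.le
    _ ≤ _ := hratio

end Engine

theorem ofReal_le_of_eventually_nhdsGT {g : ℝ → ℝ} {c : ℝ} (hg : ContinuousAt g c) {L : ℝ≥0∞}
    (h : ∀ᶠ q in 𝓝[>] c, ENNReal.ofReal (g q) ≤ L) : ENNReal.ofReal (g c) ≤ L :=
  le_of_tendsto ((ENNReal.continuous_ofReal.tendsto _).comp
    (hg.tendsto.mono_left nhdsWithin_le_nhds)) h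

section Bounds

variable {m : ℕ} {μ : Measure (ℕ → Fin m)} [IsFiniteMeasure μ] {α : ℝ}

theorem ofReal_rpow_div_floor_le_essSup (hμ : μ ≠ 0)
    (hae : ∀ᵐ x ∂μ, thetaUpper μ α x < ⊤ ∧ 0 < thetaLower μ α x) :
    ENNReal.ofReal ((m : ℝ) ^ α / ⌊(m : ℝ) ^ α⌋₊) ≤
      essSup (fun x => thetaUpper μ α x / thetaLower μ α x) μ := by
  set β := (m : ℝ) ^ α
  have hβ : 0 < β := Real.rpow_pos_of_pos (Nat.cast_pos.2 (pos_of_measure_ne_zero hμ)) α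
  have hnear : ∀ᶠ q in 𝓝[>] (1 : ℝ), 1 < q ∧ q ^ 2 * β < ⌊β⌋₊ + 1 := by
    refine (eventually_mem_nhdsWithin (s := Ioi 1)).and (.filter_mono nhdsWithin_le_nhds ?_)
    exact ContinuousAt.eventually_lt (by fun_prop) continuousAt_const
      (by simpa using Nat.lt_floor_add_one β)
  have hg : ContinuousAt (fun q : ℝ => β / ⌊β⌋₊ / q ^ 4) 1 :=
    continuousAt_const.div (by fun_prop) (by norm_num)
  simpa using ofReal_le_of_eventually_nhdsGT hg <| hnear.mono fun q ⟨hq, hqβ⟩ => by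
    obtain ⟨a, b, ha, hb, hL, ⟨k, hk, hab⟩, -⟩ :=
      exists_ratio_le_essSup_and_branching_numbers hμ hae hq
    have hkF : (k : ℝ) ≤ ⌊β⌋₊ := by
      exact_mod_cast Nat.lt_succ_iff.1 (by exact_mod_cast hk.trans hqβ)
    have hk0 : (0 : ℝ) < k := by
      by_contra! hk0
      nlinarith [mul_nonpos_of_nonpos_of_nonneg hk0 (by positivity : (0 : ℝ) ≤ q ^ 3 * b)]
    refine le_trans (ENNReal.ofReal_le_ofReal ?_) hL
    rw [div_div, div_le_div_iff₀ (mul_pos (hk0.trans_le hkF) (by positivity)) (by positivity)]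
    calc β * (q * a) = q * (β * a) := by ring
      _ ≤ q * (k * q ^ 3 * b) := by gcongr
      _ ≤ q * (⌊β⌋₊ * q ^ 3 * b) := by gcongr
      _ = b * (⌊β⌋₊ * q ^ 4) := by ring

theorem ofReal_ceil_div_rpow_le_essSup (hμ : μ ≠ 0)
    (hae : ∀ᵐ x ∂μ, thetaUpper μ α x < ⊤ ∧ 0 < thetaLower μ α x) :
    ENNReal.ofReal (⌈(m : ℝ) ^ α⌉₊ / (m : ℝ) ^ α) ≤
      essSup (fun x => thetaUpper μ α x / thetaLower μ α x) μ := by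
  set β := (m : ℝ) ^ α
  have hβ : 0 < β := Real.rpow_pos_of_pos (Nat.cast_pos.2 (pos_of_measure_ne_zero hμ)) α
  have hnear : ∀ᶠ q in 𝓝[>] (1 : ℝ), 1 < q ∧ (⌈β⌉₊ - 1) * q ^ 3 < β := by
    refine (eventually_mem_nhdsWithin (s := Ioi 1)).and (.filter_mono nhdsWithin_le_nhds ?_)
    exact ContinuousAt.eventually_lt (by fun_prop) continuousAt_const
      (by simpa [sub_lt_iff_lt_add] using Nat.ceil_lt_add_one hβ.le)
  have hg : ContinuousAt (fun q : ℝ => ⌈β⌉₊ / β / q ^ 3) 1 :=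
    continuousAt_const.div (by fun_prop) (by norm_num)
  simpa using ofReal_le_of_eventually_nhdsGT hg <| hnear.mono fun q ⟨hq, hqβ⟩ => by
    obtain ⟨a, b, ha, hb, hL, -, ⟨k, hk, hab⟩⟩ :=
      exists_ratio_le_essSup_and_branching_numbers hμ hae hq
    have hCk : (⌈β⌉₊ : ℝ) ≤ k := by
      have : (⌈β⌉₊ : ℝ) - 1 < k := lt_of_mul_lt_mul_right (hqβ.trans hk) (by positivity)
      exact_mod_cast Nat.lt_succ_iff.1 (by exact_mod_cast (by linarith : (⌈β⌉₊ : ℝ) < k + 1))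
    refine le_trans (ENNReal.ofReal_le_ofReal ?_) hL
    rw [div_div, div_le_div_iff₀ (by positivity) (by positivity)]
    calc ⌈β⌉₊ * (q * a) ≤ q * (k * a) := by rw [mul_left_comm]; gcongr
      _ ≤ q * (q ^ 2 * β * b) := by gcongr
      _ = b * (β * q ^ 3) := by ring

end Bounds

theorem marstrand_lower_bound_general (m : ℕ) (α : ℝ)
    (μ : Measure (ℕ → Fin m)) [IsFiniteMeasure μ]
    (hμ : μ ≠ 0)
    (hae : ∀ᵐ x ∂μ, thetaUpper μ α x < ⊤ ∧ 0 < thetaLower μ α x) :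
    ENNReal.ofReal (max ((m : ℝ) ^ α / (⌊(m : ℝ) ^ α⌋₊ : ℝ))
        ((⌈(m : ℝ) ^ α⌉₊ : ℝ) / (m : ℝ) ^ α)) ≤
      essSup (fun x => thetaUpper μ α x / thetaLower μ α x) μ := by
  rw [ENNReal.ofReal_max]
  exact max_le (ofReal_rpow_div_floor_le_essSup hμ hae) (ofReal_ceil_div_rpow_le_essSup hμ hae)

theorem marstrand_lower_bound (m : ℕ) (hm : 2 ≤ m) (α : ℝ)
    (hα : α ∈ Set.Ioo (0 : ℝ) 1) (μ : Measure (ℕ → Fin m)) [IsFiniteMeasure μ]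
    (hμ : μ ≠ 0)
    (hae : ∀ᵐ x ∂μ, thetaUpper μ α x < ⊤ ∧ 0 < thetaLower μ α x) :
    ENNReal.ofReal (max ((m : ℝ) ^ α / (⌊(m : ℝ) ^ α⌋₊ : ℝ))
        ((⌈(m : ℝ) ^ α⌉₊ : ℝ) / (m : ℝ) ^ α)) ≤
      essSup (fun x => thetaUpper μ α x / thetaLower μ α x) μ :=
  marstrand_lower_bound_general m α μ hμ hae
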